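/- arXiv:1910.05251 — 3 statements merged into one kernel-verified Lean document; each statement's English description precedes it below -/
import Mathlib

section
/- Let L : ℝ[x₁,…,x_d] → ℝ be linear and nonnegative on squares, q a polynomial, and ν a finite positive Borel measure on a compact set K with L(qf) = ∫_K f dν for all polynomials f. Then for every f ∈ ℝ[x₁,…,x_d] and every ψ ∈ L²(ν): (∫_K f·ψ dν)² ≤ (∫_K q·ψ² dν)·L(f²). -/
/-!
For a polynomial `g`, both sides are values of `L`: by the representation of `L (q * ·)` as an
integral, `∫ f g dν = L ((q g) f)` and `∫ q g² dν = L ((q g)²)`, so the inequality is the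
Cauchy–Schwarz inequality for the positive semidefinite form `(a, b) ↦ L (a b)`. In `L²(ν|_K)`
both sides are continuous (multiplication by `q`, which is bounded on `K`, is a bounded operator),
and polynomials are dense there: bounded continuous functions are dense, and on the compact set
`K` they are uniform limits of polynomials by Stone–Weierstrass.
-/

open MeasureTheory MvPolynomial
open scoped ENNReal InnerProductSpace

theorem LinearMap.sq_map_mul_le_map_sq_mul_map_sq {R : Type*} [CommRing R] [Algebra ℝ R]
    (L : R →ₗ[ℝ] ℝ) (hL : ∀ p : R, 0 ≤ L (p ^ 2)) (x y : R) :
    L (x * y) ^ 2 ≤ L (x ^ 2) * L (y ^ 2) := by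
  have hquad : ∀ t : ℝ, 0 ≤ L (x ^ 2) * (t * t) + 2 * L (x * y) * t + L (y ^ 2) := by
    intro t
    have expand : (t • x + y) ^ 2 = (t * t) • x ^ 2 + ((2 * t) • (x * y) + y ^ 2) := by
      simp only [Algebra.smul_def, map_mul, map_ofNat]
      ring
    have h := hL (t • x + y)
    rw [expand, map_add, map_add, L.map_smul, L.map_smul, smul_eq_mul, smul_eq_mul] at h
    linarith
  have hd := discrim_le_zero hquad
  rw [discrim] at hd
  linarith

theorem MvPolynomial.exists_eval_near_of_isCompact {σ : Type*} {K : Set (σ → ℝ)}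
    (hK : IsCompact K) {φ : (σ → ℝ) → ℝ} (hφ : ContinuousOn φ K) {ε : ℝ} (hε : 0 < ε) :
    ∃ g : MvPolynomial σ ℝ, ∀ x ∈ K, |eval x g - φ x| < ε := by
  have : CompactSpace K := isCompact_iff_compactSpace.mp hK
  let coords : σ → C(K, ℝ) := fun i => (ContinuousMap.eval i).restrict K
  have aeval_coords : ∀ (g : MvPolynomial σ ℝ) (z : K), aeval coords g z = eval z.1 g := by
    intro g z
    rw [← ContinuousMap.evalAlgHom_apply ℝ ℝ, ← AlgHom.comp_apply, comp_aeval]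
    exact congrFun (aeval_eq_eval _) g
  have hsep : (aeval (R := ℝ) coords).range.SeparatesPoints := by
    intro x y hxy
    obtain ⟨i, hi⟩ := Function.ne_iff.mp (Subtype.coe_ne_coe.mpr hxy)
    exact ⟨coords i, ⟨coords i, ⟨X i, aeval_X coords i⟩, rfl⟩, hi⟩
  obtain ⟨⟨_, g, rfl⟩, hg⟩ := ContinuousMap.exists_mem_subalgebra_near_continuous_of_separatesPoints
    _ hsep (K.domRestrict φ) hφ.domRestrict ε hε
  refine ⟨g, fun x hx => ?_⟩
  simpa [aeval_coords] using hg ⟨x, hx⟩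

theorem ContinuousOn.memLp_restrict_of_isCompact {X E : Type*} [TopologicalSpace X]
    [T2Space X] [MeasurableSpace X] [OpensMeasurableSpace X] [NormedAddCommGroup E]
    [SecondCountableTopologyEither X E]
    {K : Set X} (hK : IsCompact K) (ν : Measure X) [IsFiniteMeasure ν] {φ : X → E}
    (hφ : ContinuousOn φ K) (p : ℝ≥0∞) : MemLp φ p (ν.restrict K) := by
  obtain ⟨C, hC⟩ := hK.exists_bound_of_continuousOn hφ
  exact MemLp.of_bound (hφ.aestronglyMeasurable hK.measurableSet) C
    ((ae_restrict_mem hK.measurableSet).mono hC)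

theorem MeasureTheory.L2.real_inner_eq_integral_of_ae_eq {α : Type*} [MeasurableSpace α]
    {μ : Measure α} {u v : Lp ℝ 2 μ} {f g : α → ℝ} (hu : u =ᵐ[μ] f) (hv : v =ᵐ[μ] g) :
    ⟪u, v⟫_ℝ = ∫ x, f x * g x ∂μ := by
  rw [L2.inner_def]
  refine integral_congr_ae ?_
  filter_upwards [hu, hv] with x hux hvx
  rw [hux, hvx, real_inner_eq_re_inner, RCLike.inner_apply]
  simp [mul_comm]

theorem MeasureTheory.MemLp.exists_clm_ae_eq_mul {α 𝕜 : Type*} [MeasurableSpace α]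
    [NontriviallyNormedField 𝕜] {μ : Measure α} {m : α → 𝕜} (hm : MemLp m ∞ μ) (p : ℝ≥0∞)
    [Fact (1 ≤ p)] : ∃ T : Lp 𝕜 p μ →L[𝕜] Lp 𝕜 p μ, ∀ u, T u =ᵐ[μ] fun x => m x * u x := by
  refine ⟨(ContinuousLinearMap.mul 𝕜 𝕜).holderL μ ∞ p p (hm.toLp m), fun u => ?_⟩
  filter_upwards [(ContinuousLinearMap.mul 𝕜 𝕜).coeFn_holder (r := p) (hm.toLp m) u,
    hm.coeFn_toLp] with x hx hmx
  simp [hx, hmx]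

section

variable {σ : Type*} [Countable σ] {K : Set (σ → ℝ)} (hK : IsCompact K)
  (ν : Measure (σ → ℝ)) [IsFiniteMeasure ν] (p : ℝ≥0∞)

noncomputable def MvPolynomial.toLpOn (g : MvPolynomial σ ℝ) : Lp ℝ p (ν.restrict K) :=
  ((continuous_eval g).continuousOn.memLp_restrict_of_isCompact hK ν p).toLp _

theorem MvPolynomial.coeFn_toLpOn (g : MvPolynomial σ ℝ) :
    toLpOn hK ν p g =ᵐ[ν.restrict K] fun x => eval x g :=
  MemLp.coeFn_toLp _

theorem MvPolynomial.denseRange_toLpOn [Fact (1 ≤ p)] (hp : p ≠ ∞) :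
    DenseRange (toLpOn hK ν p) := by
  set μ := ν.restrict K
  refine dense_closure.mp <| (BoundedContinuousFunction.toLp_denseRange ℝ μ ℝ hp).mono ?_
  rintro _ ⟨φ, rfl⟩
  rw [Metric.mem_closure_iff]
  intro ε hε
  set c : ℝ := measureUnivNNReal μ ^ p.toReal⁻¹
  have hc : 0 ≤ c := by positivity
  obtain ⟨g, hg⟩ := exists_eval_near_of_isCompact hK φ.continuous.continuousOn
    (div_pos hε (by linarith : (0 : ℝ) < c + 1))
  refine ⟨toLpOn hK ν p g, ⟨g, rfl⟩, ?_⟩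
  rw [dist_eq_norm]
  refine (Lp.norm_le_of_ae_bound (C := ε / (c + 1)) (by positivity) ?_).trans_lt ?_
  · filter_upwards [Lp.coeFn_sub (BoundedContinuousFunction.toLp p μ ℝ φ) (toLpOn hK ν p g),
      BoundedContinuousFunction.coeFn_toLp p μ ℝ φ, coeFn_toLpOn hK ν p g,
      ae_restrict_mem hK.measurableSet] with x hsub hφ hg' hx
    rw [hsub, Pi.sub_apply, hφ, hg', Real.norm_eq_abs, abs_sub_comm]
    exact (hg x hx).le
  · rw [mul_div_assoc', div_lt_iff₀ (by linarith)]
    nlinarith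

end

theorem cauchy_schwarz_L2_extension (d : ℕ)
    (L : MvPolynomial (Fin d) ℝ →ₗ[ℝ] ℝ)
    (hL : ∀ p : MvPolynomial (Fin d) ℝ, 0 ≤ L (p ^ 2))
    (q : MvPolynomial (Fin d) ℝ)
    (K : Set (Fin d → ℝ)) (hK : IsCompact K)
    (ν : Measure (Fin d → ℝ)) [IsFiniteMeasure ν]
    (hrep : ∀ f : MvPolynomial (Fin d) ℝ,
      L (q * f) = ∫ x in K, eval x f ∂ν) :
    ∀ (f : MvPolynomial (Fin d) ℝ) (ψ : (Fin d → ℝ) → ℝ),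
      MemLp ψ 2 (ν.restrict K) →
      (∫ x in K, eval x f * ψ x ∂ν) ^ 2 ≤
        (∫ x in K, eval x q * (ψ x) ^ 2 ∂ν) * L (f ^ 2) := by
  intro f ψ hψ
  set F := toLpOn hK ν 2 f
  obtain ⟨T, hT⟩ := ((continuous_eval q).continuousOn.memLp_restrict_of_isCompact hK ν ∞
    ).exists_clm_ae_eq_mul 2
  have inner_F : ∀ {φ} (hφ : MemLp φ 2 (ν.restrict K)),
      ⟪F, hφ.toLp φ⟫_ℝ = ∫ x in K, eval x f * φ x ∂ν :=
    fun hφ => L2.real_inner_eq_integral_of_ae_eq (coeFn_toLpOn hK ν 2 f) hφ.coeFn_toLp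
  have inner_T : ∀ {φ} (hφ : MemLp φ 2 (ν.restrict K)),
      ⟪T (hφ.toLp φ), hφ.toLp φ⟫_ℝ = ∫ x in K, eval x q * φ x ^ 2 ∂ν := by
    intro φ hφ
    have hTφ : T (hφ.toLp φ) =ᵐ[ν.restrict K] fun x => eval x q * φ x := by
      filter_upwards [hT (hφ.toLp φ), hφ.coeFn_toLp] with x hTx hφx
      rw [hTx, hφx]
    rw [L2.real_inner_eq_integral_of_ae_eq hTφ hφ.coeFn_toLp]
    simp only [sq, mul_assoc]
  have on_polynomials : ∀ g, ⟪F, toLpOn hK ν 2 g⟫_ℝ ^ 2 ≤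
      ⟪T (toLpOn hK ν 2 g), toLpOn hK ν 2 g⟫_ℝ * L (f ^ 2) := by
    intro g
    rw [toLpOn, inner_F, inner_T]
    have hfg := hrep (f * g)
    have hqg := hrep (q * g ^ 2)
    simp only [map_mul, map_pow] at hfg hqg
    rw [← hfg, ← hqg]
    convert (L.sq_map_mul_le_map_sq_mul_map_sq hL (q * g) f) using 3 <;> ring
  have on_L2 : ∀ u, ⟪F, u⟫_ℝ ^ 2 ≤ ⟪T u, u⟫_ℝ * L (f ^ 2) := fun u =>
    (denseRange_toLpOn hK ν 2 (by norm_num)).induction_on u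
      (isClosed_le (by fun_prop) (by fun_prop)) on_polynomials
  simpa only [inner_F, inner_T] using on_L2 (hψ.toLp ψ)
end

section
/- Let L : ℝ[x₁,…,x_d] → ℝ be linear and nonnegative on squares, q a polynomial, ν a finite positive Borel measure on a compact set K with L(qf) = ∫_K f dν for all polynomials f, and suppose L is nonzero. Then ν({x ∈ K : q(x) ≤ 0}) = 0. -/
/-!
Cauchy–Schwarz for the functional `L`, which is nonnegative on squares, gives
`L(q p)² ≤ L(1) L(q² p²)`, i.e. `(∫_K p dν)² ≤ L(1) ∫_K q p² dν` for every polynomial `p`.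
By dominated convergence this inequality survives bounded pointwise limits, so by
Stone–Weierstrass it holds for continuous functions on `K`, and then for indicators of closed
sets. For the indicator of `{q ≤ 0}` the right-hand side is `≤ 0`, so `ν(K ∩ {q ≤ 0}) = 0`.
-/

open MeasureTheory MvPolynomial Filter Topology Set

theorem LinearMap.sq_apply_mul_le {A : Type*} [CommRing A] [Algebra ℝ A] (L : A →ₗ[ℝ] ℝ)
    (hL : ∀ a, 0 ≤ L (a ^ 2)) (a b : A) : L (a * b) ^ 2 ≤ L (a ^ 2) * L (b ^ 2) := by
  have hquad : ∀ t : ℝ, 0 ≤ L (b ^ 2) * (t * t) + 2 * L (a * b) * t + L (a ^ 2) := by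
    intro t
    have expand : (t • b + a) ^ 2 = (t * t) • b ^ 2 + (2 * t) • (a * b) + a ^ 2 := by
      simp only [Algebra.smul_def, map_mul, map_ofNat]
      ring
    have hnonneg := hL (t • b + a)
    rw [expand, map_add, map_add, map_smul, map_smul, smul_eq_mul, smul_eq_mul] at hnonneg
    linarith
  have hdiscr := discrim_le_zero hquad
  rw [discrim] at hdiscr
  nlinarith

theorem MvPolynomial.exists_forall_abs_eval_sub_lt {σ : Type*} {K : Set (σ → ℝ)}
    (hK : IsCompact K) {g : (σ → ℝ) → ℝ} (hg : ContinuousOn g K) {ε : ℝ} (hε : 0 < ε) :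
    ∃ p : MvPolynomial σ ℝ, ∀ x ∈ K, |eval x p - g x| < ε := by
  have : CompactSpace K := isCompact_iff_compactSpace.mp hK
  let coord : σ → C(K, ℝ) := fun i =>
    ⟨fun x => (x : σ → ℝ) i, (continuous_apply i).comp continuous_subtype_val⟩
  have aeval_coord (p : MvPolynomial σ ℝ) (x : K) : aeval coord p x = eval (x : σ → ℝ) p := by
    change (ContinuousMap.evalAlgHom ℝ ℝ x).comp (aeval coord) p = _
    rw [comp_aeval]
    rfl
  have separates : (aeval (R := ℝ) coord).range.SeparatesPoints := by
    intro x y hxy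
    obtain ⟨i, hi⟩ := Function.ne_iff.mp fun h => hxy (Subtype.ext h)
    exact ⟨coord i, ⟨coord i, ⟨X i, aeval_X coord i⟩, rfl⟩, hi⟩
  obtain ⟨⟨f, p, rfl⟩, hf⟩ := ContinuousMap.exists_mem_subalgebra_near_continuous_of_separatesPoints
    _ separates (K.domRestrict g) hg.domRestrict ε hε
  refine ⟨p, fun x hx => ?_⟩
  simpa [aeval_coord] using hf ⟨x, hx⟩

theorem sq_integral_le_of_tendsto {α : Type*} [MeasurableSpace α] {μ : Measure α}
    [IsFiniteMeasure μ] {w : α → ℝ} (hw : Integrable w μ) {c C : ℝ} {f : ℕ → α → ℝ}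
    {g : α → ℝ} (hfm : ∀ n, AEStronglyMeasurable (f n) μ) (hfC : ∀ n, ∀ᵐ x ∂μ, |f n x| ≤ C)
    (hfg : ∀ᵐ x ∂μ, Tendsto (fun n => f n x) atTop (𝓝 (g x)))
    (hf : ∀ n, (∫ x, f n x ∂μ) ^ 2 ≤ c * ∫ x, w x * f n x ^ 2 ∂μ) :
    (∫ x, g x ∂μ) ^ 2 ≤ c * ∫ x, w x * g x ^ 2 ∂μ := by
  have lim_lin : Tendsto (fun n => ∫ x, f n x ∂μ) atTop (𝓝 (∫ x, g x ∂μ)) :=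
    tendsto_integral_of_dominated_convergence (fun _ => C) hfm (integrable_const C) hfC hfg
  have lim_quad : Tendsto (fun n => ∫ x, w x * f n x ^ 2 ∂μ) atTop
      (𝓝 (∫ x, w x * g x ^ 2 ∂μ)) := by
    refine tendsto_integral_of_dominated_convergence (fun x => |w x| * C ^ 2)
      (fun n => hw.1.mul ((hfm n).pow 2)) (hw.abs.mul_const _) (fun n => ?_) ?_
    · filter_upwards [hfC n] with x hx
      rw [norm_mul, norm_pow, Real.norm_eq_abs, Real.norm_eq_abs]
      gcongr
    · filter_upwards [hfg] with x hx
      exact (hx.pow 2).const_mul (w x)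
  exact le_of_tendsto_of_tendsto' (lim_lin.pow 2) (lim_quad.const_mul c) hf

section RepresentingMeasure

variable {σ : Type*} {L : MvPolynomial σ ℝ →ₗ[ℝ] ℝ} {q : MvPolynomial σ ℝ}
  {K : Set (σ → ℝ)} {ν : Measure (σ → ℝ)}

theorem sq_integral_eval_le (hL : ∀ p, 0 ≤ L (p ^ 2))
    (hrep : ∀ f, L (q * f) = ∫ x in K, eval x f ∂ν) (p : MvPolynomial σ ℝ) :
    (∫ x in K, eval x p ∂ν) ^ 2 ≤ L 1 * ∫ x in K, eval x q * eval x p ^ 2 ∂ν :=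
  calc (∫ x in K, eval x p ∂ν) ^ 2 = L (1 * (q * p)) ^ 2 := by rw [one_mul, hrep]
    _ ≤ L (1 ^ 2) * L ((q * p) ^ 2) := L.sq_apply_mul_le hL 1 (q * p)
    _ = L 1 * ∫ x in K, eval x q * eval x p ^ 2 ∂ν := by
      rw [one_pow, show (q * p) ^ 2 = q * (q * p ^ 2) by ring, hrep]
      simp only [eval_mul, eval_pow]

theorem sq_integral_le_of_continuousOn [Countable σ] [IsFiniteMeasure ν] (hK : IsCompact K)
    (hL : ∀ p, 0 ≤ L (p ^ 2)) (hrep : ∀ f, L (q * f) = ∫ x in K, eval x f ∂ν)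
    {g : (σ → ℝ) → ℝ} (hg : ContinuousOn g K) :
    (∫ x in K, g x ∂ν) ^ 2 ≤ L 1 * ∫ x in K, eval x q * g x ^ 2 ∂ν := by
  obtain ⟨G, hG⟩ := hK.exists_bound_of_continuousOn hg
  choose p hp using fun n : ℕ =>
    exists_forall_abs_eval_sub_lt hK hg (Nat.one_div_pos_of_nat (n := n))
  have hp_le (n : ℕ) (x : σ → ℝ) (hx : x ∈ K) : |eval x (p n) - g x| ≤ 1 :=
    (hp n x hx).le.trans (Nat.one_div_le_one_div (Nat.zero_le n) |>.trans_eq (by simp))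
  refine sq_integral_le_of_tendsto ((continuous_eval q).continuousOn.integrableOn_compact hK)
    (C := G + 1) (fun n => (continuous_eval (p n)).aestronglyMeasurable) (fun n => ?_) ?_
    fun n => sq_integral_eval_le hL hrep (p n)
  · filter_upwards [ae_restrict_mem hK.measurableSet] with x hx
    linarith [abs_sub_abs_le_abs_sub (eval x (p n)) (g x), hp_le n x hx, hG x hx,
      Real.norm_eq_abs (g x)]
  · filter_upwards [ae_restrict_mem hK.measurableSet] with x hx
    rw [tendsto_iff_dist_tendsto_zero]
    exact squeeze_zero (fun _ => dist_nonneg) (fun n => (hp n x hx).le)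
      tendsto_one_div_add_atTop_nhds_zero_nat

theorem sq_measureReal_inter_le_of_isClosed [Countable σ] [IsFiniteMeasure ν] (hK : IsCompact K)
    (hL : ∀ p, 0 ≤ L (p ^ 2)) (hrep : ∀ f, L (q * f) = ∫ x in K, eval x f ∂ν)
    {F : Set (σ → ℝ)} (hF : IsClosed F) :
    ν.real (K ∩ F) ^ 2 ≤ L 1 * ∫ x in K ∩ F, eval x q ∂ν := by
  let φ : ℕ → (σ → ℝ) → ℝ := fun n x => hF.apprSeq n x
  have hφ_cont (n : ℕ) : Continuous (φ n) :=
    NNReal.continuous_coe.comp (hF.apprSeq n).continuous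
  have hφ_lim (x : σ → ℝ) : Tendsto (fun n => φ n x) atTop (𝓝 (F.indicator 1 x)) := by
    have := tendsto_pi_nhds.mp (HasOuterApproxClosed.tendsto_apprSeq hF) x
    convert NNReal.tendsto_coe.mpr this
    by_cases hx : x ∈ F <;> simp [hx]
  have key := sq_integral_le_of_tendsto (μ := ν.restrict K) (C := 1)
    ((continuous_eval q).continuousOn.integrableOn_compact hK)
    (fun n => (hφ_cont n).aestronglyMeasurable)
    (fun n => ae_of_all _ fun x => by
      simpa [φ] using HasOuterApproxClosed.apprSeq_apply_le_one hF n x)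
    (ae_of_all _ hφ_lim)
    (fun n => sq_integral_le_of_continuousOn hK hL hrep (hφ_cont n).continuousOn)
  have hquad (x : σ → ℝ) :
      eval x q * F.indicator 1 x ^ 2 = F.indicator (fun y => eval y q) x := by
    by_cases hx : x ∈ F <;> simp [hx]
  simp_rw [hquad, integral_indicator_one hF.measurableSet, integral_indicator hF.measurableSet,
    Measure.restrict_restrict hF.measurableSet, measureReal_restrict_apply hF.measurableSet,
    inter_comm F K] at key
  exact key

end RepresentingMeasure

theorem representing_measure_vanishes_on_nonpositivity_set_general (d : ℕ)
    (L : MvPolynomial (Fin d) ℝ →ₗ[ℝ] ℝ)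
    (hL : ∀ p : MvPolynomial (Fin d) ℝ, 0 ≤ L (p ^ 2))
    (q : MvPolynomial (Fin d) ℝ)
    (K : Set (Fin d → ℝ)) (hK : IsCompact K)
    (ν : Measure (Fin d → ℝ)) [IsFiniteMeasure ν]
    (hrep : ∀ f : MvPolynomial (Fin d) ℝ,
      L (q * f) = ∫ x in K, eval x f ∂ν) :
    ν {x ∈ K | eval x q ≤ 0} = 0 := by
  have hF : IsClosed {x : Fin d → ℝ | eval x q ≤ 0} :=
    isClosed_le (continuous_eval q) continuous_const
  have hq_nonpos : ∫ x in K ∩ {x | eval x q ≤ 0}, eval x q ∂ν ≤ 0 :=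
    setIntegral_nonpos (hK.measurableSet.inter hF.measurableSet) fun x hx => hx.2
  have hL1 : 0 ≤ L 1 := by simpa using hL 1
  have hsq : ν.real (K ∩ {x | eval x q ≤ 0}) ^ 2 ≤ 0 :=
    (sq_measureReal_inter_le_of_isClosed hK hL hrep hF).trans
      (mul_nonpos_of_nonneg_of_nonpos hL1 hq_nonpos)
  exact (measureReal_eq_zero_iff).mp ((sq_nonpos_iff _).mp hsq)

theorem representing_measure_vanishes_on_nonpositivity_set (d : ℕ)
    (L : MvPolynomial (Fin d) ℝ →ₗ[ℝ] ℝ) (hL0 : L ≠ 0)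
    (hL : ∀ p : MvPolynomial (Fin d) ℝ, 0 ≤ L (p ^ 2))
    (q : MvPolynomial (Fin d) ℝ)
    (K : Set (Fin d → ℝ)) (hK : IsCompact K)
    (ν : Measure (Fin d → ℝ)) [IsFiniteMeasure ν]
    (hrep : ∀ f : MvPolynomial (Fin d) ℝ,
      L (q * f) = ∫ x in K, eval x f ∂ν) :
    ν {x ∈ K | eval x q ≤ 0} = 0 :=
  representing_measure_vanishes_on_nonpositivity_set_general d L hL q K hK ν hrep
end

section
/- Let L : ℝ[x₁,…,x_d] → ℝ be linear and nonnegative on squares, q a polynomial, ν a finite positive Borel measure on a compact set K with L(qf) = ∫_K f dν for all polynomials f, and assume ν({q ≤ 0}) = 0. Then the function 1/q is ν-integrable, and moreover ∫_K (f²/q) dν ≤ L(f²) for every polynomial f. -/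
/-!
Approximating a continuous `g` uniformly on `K` by polynomials `p` (Stone–Weierstrass), the
Cauchy–Schwarz inequality `L(f (q p))² ≤ L(f²) L((q p)²)` passes to the limit
`(∫_K f g dν)² ≤ L(f²) ∫_K q g² dν`. For `g = f q / (q² + δ)` we have `q g² ≤ f g` where `q > 0`,
so `A = ∫_K f² q / (q² + δ) dν` satisfies `A² ≤ L(f²) A`, i.e. `A ≤ L(f²)`. Monotone convergence
as `δ ↓ 0` gives the integrability of `f² / q` and the bound; `f = 1` gives that of `1 / q`.
-/

open MeasureTheory MvPolynomial Filter Topology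

theorem LinearMap.sq_map_mul_le_of_nonneg_sq {A : Type*} [CommRing A] [Algebra ℝ A]
    (L : A →ₗ[ℝ] ℝ) (hL : ∀ p, 0 ≤ L (p ^ 2)) (a b : A) :
    L (a * b) ^ 2 ≤ L (a ^ 2) * L (b ^ 2) := by
  have hquad : ∀ t : ℝ, 0 ≤ L (a ^ 2) * (t * t) + 2 * L (a * b) * t + L (b ^ 2) := by
    intro t
    have hexp : (t • a + b) ^ 2 = (t * t) • a ^ 2 + (2 * t) • (a * b) + b ^ 2 := by
      simp only [Algebra.smul_def, map_mul, map_ofNat]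
      ring
    have := hL (t • a + b)
    rw [hexp, map_add, map_add, map_smul, map_smul, smul_eq_mul, smul_eq_mul] at this
    linarith
  have := discrim_le_zero hquad
  rw [discrim] at this
  linarith

theorem MvPolynomial.exists_tendstoUniformlyOn_eval {σ : Type*} {K : Set (σ → ℝ)}
    (hK : IsCompact K) (g : C(σ → ℝ, ℝ)) :
    ∃ P : ℕ → MvPolynomial σ ℝ, TendstoUniformlyOn (fun n x ↦ eval x (P n)) g atTop K := by
  let coords : MvPolynomial σ ℝ →ₐ[ℝ] C(σ → ℝ, ℝ) :=
    aeval fun i ↦ ⟨fun x ↦ x i, continuous_apply i⟩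
  have hcoords (p : MvPolynomial σ ℝ) (x : σ → ℝ) : coords p x = eval x p := by
    change ContinuousMap.evalAlgHom ℝ ℝ x (coords p) = _
    rw [← AlgHom.comp_apply, comp_aeval, ← MvPolynomial.coe_aeval_eq_eval]
    rfl
  have hsep : coords.range.SeparatesPoints := by
    intro x y hxy
    obtain ⟨i, hi⟩ := Function.ne_iff.mp hxy
    exact ⟨_, ⟨coords (X i), ⟨X i, rfl⟩, rfl⟩, by simpa [hcoords] using hi⟩
  have hnear (n : ℕ) : ∃ p : MvPolynomial σ ℝ, ∀ x ∈ K, dist (g x) (eval x p) < 1 / (n + 1) := by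
    obtain ⟨_, ⟨p, rfl⟩, hp⟩ :=
      ContinuousMap.exists_mem_subalgebra_near_continuous_of_isCompact_of_separatesPoints
        hsep g hK (ε := 1 / (n + 1)) (by positivity)
    exact ⟨p, fun x hx ↦ by simpa [dist_comm, dist_eq_norm, hcoords] using hp x hx⟩
  choose P hP using hnear
  refine ⟨P, Metric.tendstoUniformlyOn_iff.mpr fun ε hε ↦ ?_⟩
  filter_upwards [tendsto_one_div_add_atTop_nhds_zero_nat.eventually (gt_mem_nhds hε)]
    with n hn x hx using (hP n x hx).trans hn

theorem tendsto_setIntegral_mul_pow_of_tendstoUniformlyOn {X : Type*} [TopologicalSpace X]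
    [T2Space X] [MeasurableSpace X] [OpensMeasurableSpace X] {μ : Measure X}
    [IsFiniteMeasureOnCompacts μ] {K : Set X} (hK : IsCompact K) {F : ℕ → X → ℝ} {g : X → ℝ}
    (hF : ∀ n, ContinuousOn (F n) K) (hFg : TendstoUniformlyOn F g atTop K)
    {a : X → ℝ} (ha : ContinuousOn a K) (k : ℕ) :
    Tendsto (fun n ↦ ∫ x in K, a x * F n x ^ k ∂μ) atTop (𝓝 (∫ x in K, a x * g x ^ k ∂μ)) := by
  have hKm := hK.measurableSet
  have hg : ContinuousOn g K := hFg.continuousOn (Frequently.of_forall hF)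
  refine tendsto_integral_filter_of_dominated_convergence (fun x ↦ |a x| * (|g x| + 1) ^ k)
    (Eventually.of_forall fun n ↦ (ha.mul ((hF n).pow k)).aestronglyMeasurable hKm) ?_
    ((ha.abs.mul ((hg.abs.add continuousOn_const).pow k)).integrableOn_compact hK) ?_
  · filter_upwards [Metric.tendstoUniformlyOn_iff.mp hFg 1 one_pos] with n hn
    filter_upwards [ae_restrict_mem hKm] with x hx
    have hFx : |F n x| ≤ |g x| + 1 := by
      have := hn x hx
      rw [Real.dist_eq] at this
      linarith [abs_sub_abs_le_abs_sub (F n x) (g x), abs_sub_comm (g x) (F n x)]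
    rw [Real.norm_eq_abs, abs_mul, abs_pow]
    gcongr
  · filter_upwards [ae_restrict_mem hKm] with x hx
    exact ((hFg.tendsto_at hx).pow k).const_mul (a x)

theorem integrable_and_integral_le_of_monotone {α : Type*} [MeasurableSpace α] {μ : Measure α}
    {G : ℕ → α → ℝ} {F : α → ℝ} {C : ℝ} (hG : ∀ n, Integrable (G n) μ)
    (hG₀ : ∀ n, 0 ≤ᵐ[μ] G n) (hmono : ∀ᵐ x ∂μ, Monotone fun n ↦ G n x)
    (hlim : ∀ᵐ x ∂μ, Tendsto (fun n ↦ G n x) atTop (𝓝 (F x)))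
    (hC : ∀ n, ∫ x, G n x ∂μ ≤ C) :
    Integrable F μ ∧ ∫ x, F x ∂μ ≤ C := by
  have hF : AEStronglyMeasurable F μ :=
    aestronglyMeasurable_of_tendsto_ae _ (fun n ↦ (hG n).1) hlim
  have hF₀ : 0 ≤ᵐ[μ] F := by
    filter_upwards [hG₀ 0, hmono, hlim] with x h₀ hx hxlim
    exact h₀.trans (ge_of_tendsto' hxlim fun n ↦ hx (Nat.zero_le n))
  have hlint : ∫⁻ x, ENNReal.ofReal (F x) ∂μ ≤ ENNReal.ofReal C := by
    refine le_of_tendsto' (lintegral_tendsto_of_tendsto_of_monotone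
      (fun n ↦ (hG n).1.aemeasurable.ennreal_ofReal) ?_ ?_) fun n ↦ ?_
    · filter_upwards [hmono] with x hx n m hnm using ENNReal.ofReal_le_ofReal (hx hnm)
    · filter_upwards [hlim] with x hx using (ENNReal.continuous_ofReal.tendsto _).comp hx
    · rw [← ofReal_integral_eq_lintegral_ofReal (hG n) (hG₀ n)]
      exact ENNReal.ofReal_le_ofReal (hC n)
  have hC₀ : 0 ≤ C := (integral_nonneg_of_ae (hG₀ 0)).trans (hC 0)
  refine ⟨⟨hF, (hasFiniteIntegral_iff_ofReal hF₀).2 (hlint.trans_lt ENNReal.ofReal_lt_top)⟩, ?_⟩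
  rw [integral_eq_lintegral_of_nonneg_ae hF₀ hF]
  exact ENNReal.toReal_le_of_le_ofReal hC₀ hlint

theorem monotone_div_sq_add_one_div_succ {b : ℝ} (hb : 0 ≤ b) :
    Monotone fun n : ℕ ↦ b / (b ^ 2 + 1 / (n + 1)) := by
  intro m n hmn
  dsimp only
  gcongr

theorem tendsto_div_sq_add_one_div_succ {b : ℝ} (hb : b ≠ 0) :
    Tendsto (fun n : ℕ ↦ b / (b ^ 2 + 1 / (n + 1))) atTop (𝓝 b⁻¹) := by
  have := tendsto_const_nhds (x := b) |>.div
    (tendsto_one_div_add_atTop_nhds_zero_nat.const_add (b ^ 2)) (by simpa using hb)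
  have hlim : b / (b ^ 2 + 0) = b⁻¹ := by rw [add_zero, sq, div_mul_cancel_left₀ hb]
  rwa [hlim] at this

theorem Continuous.div_sq_add {X : Type*} [TopologicalSpace X] {u : X → ℝ} (hu : Continuous u)
    {δ : ℝ} (hδ : 0 < δ) : Continuous fun x ↦ u x / (u x ^ 2 + δ) :=
  hu.div ((hu.pow 2).add continuous_const) fun x ↦ by positivity

section PositiveFunctional

variable {σ : Type*} (L : MvPolynomial σ ℝ →ₗ[ℝ] ℝ) (hL : ∀ p, 0 ≤ L (p ^ 2))
  {q : MvPolynomial σ ℝ} {K : Set (σ → ℝ)} {ν : Measure (σ → ℝ)}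
  (hrep : ∀ f, L (q * f) = ∫ x in K, eval x f ∂ν)
include hL hrep

theorem sq_setIntegral_eval_mul_le (f p : MvPolynomial σ ℝ) :
    (∫ x in K, eval x f * eval x p ∂ν) ^ 2
      ≤ L (f ^ 2) * ∫ x in K, eval x q * eval x p ^ 2 ∂ν := by
  have h₁ : ∫ x in K, eval x f * eval x p ∂ν = L (f * (q * p)) := by
    rw [mul_left_comm, hrep]; simp
  have h₂ : ∫ x in K, eval x q * eval x p ^ 2 ∂ν = L ((q * p) ^ 2) := by
    rw [mul_pow, sq q, mul_assoc, hrep]; simp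
  rw [h₁, h₂]
  exact L.sq_map_mul_le_of_nonneg_sq hL f (q * p)

theorem sq_setIntegral_eval_mul_le_of_continuous [Countable σ] [IsFiniteMeasureOnCompacts ν]
    (hK : IsCompact K) (f : MvPolynomial σ ℝ) {g : (σ → ℝ) → ℝ} (hg : Continuous g) :
    (∫ x in K, eval x f * g x ∂ν) ^ 2 ≤ L (f ^ 2) * ∫ x in K, eval x q * g x ^ 2 ∂ν := by
  obtain ⟨P, hP⟩ := exists_tendstoUniformlyOn_eval hK ⟨g, hg⟩
  have hPc (n : ℕ) : ContinuousOn (fun x ↦ eval x (P n)) K := (continuous_eval _).continuousOn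
  have h₁ := tendsto_setIntegral_mul_pow_of_tendstoUniformlyOn (μ := ν) hK hPc hP
    (continuous_eval f).continuousOn 1
  have h₂ := tendsto_setIntegral_mul_pow_of_tendstoUniformlyOn (μ := ν) hK hPc hP
    (continuous_eval q).continuousOn 2
  simp only [pow_one] at h₁
  exact le_of_tendsto_of_tendsto' (h₁.pow 2) (h₂.const_mul _)
    fun n ↦ sq_setIntegral_eval_mul_le L hL hrep f (P n)

theorem setIntegral_sq_mul_div_sq_add_le [Countable σ] [IsFiniteMeasureOnCompacts ν]
    (hK : IsCompact K) (hq : ∀ᵐ x ∂ν.restrict K, 0 ≤ eval x q) (f : MvPolynomial σ ℝ)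
    {δ : ℝ} (hδ : 0 < δ) :
    ∫ x in K, eval x f ^ 2 * (eval x q / (eval x q ^ 2 + δ)) ∂ν ≤ L (f ^ 2) := by
  set r : (σ → ℝ) → ℝ := fun x ↦ eval x q / (eval x q ^ 2 + δ)
  have hr : Continuous r := (continuous_eval q).div_sq_add hδ
  have hf := continuous_eval f
  have hcs := sq_setIntegral_eval_mul_le_of_continuous L hL hrep hK f
    (g := fun x ↦ eval x f * r x) (hf.mul hr)
  simp only [← mul_assoc, ← sq] at hcs
  set A := ∫ x in K, eval x f ^ 2 * r x ∂ν
  have hA : 0 ≤ A := integral_nonneg_of_ae <| by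
    filter_upwards [hq] with x hx using by positivity
  have hB : ∫ x in K, eval x q * (eval x f * r x) ^ 2 ∂ν ≤ A := by
    refine integral_mono_ae
      (((continuous_eval q).mul ((hf.mul hr).pow 2)).continuousOn.integrableOn_compact hK)
      (((hf.pow 2).mul hr).continuousOn.integrableOn_compact hK) ?_
    filter_upwards [hq] with x hx
    have hqr : eval x q * r x ≤ 1 := by
      rw [mul_div, ← sq, div_le_one (by positivity)]
      linarith
    have : 0 ≤ eval x f ^ 2 * r x := by positivity
    calc eval x q * (eval x f * r x) ^ 2 = eval x f ^ 2 * r x * (eval x q * r x) := by ring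
      _ ≤ eval x f ^ 2 * r x := mul_le_of_le_one_right this hqr
  nlinarith [hL f]

end PositiveFunctional

theorem inv_q_integrable_and_bound (d : ℕ)
    (L : MvPolynomial (Fin d) ℝ →ₗ[ℝ] ℝ)
    (hL : ∀ p : MvPolynomial (Fin d) ℝ, 0 ≤ L (p ^ 2))
    (q : MvPolynomial (Fin d) ℝ)
    (K : Set (Fin d → ℝ)) (hK : IsCompact K)
    (ν : Measure (Fin d → ℝ)) [IsFiniteMeasure ν]
    (hrep : ∀ f : MvPolynomial (Fin d) ℝ,
      L (q * f) = ∫ x in K, eval x f ∂ν)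
    (hnull : ν {x | eval x q ≤ 0} = 0) :
    IntegrableOn (fun x => (eval x q)⁻¹) K ν ∧
      ∀ f : MvPolynomial (Fin d) ℝ,
        (∫ x in K, (eval x f) ^ 2 / eval x q ∂ν) ≤ L (f ^ 2) := by
  have hpos : ∀ᵐ x ∂ν.restrict K, 0 < eval x q :=
    ae_restrict_of_ae <| by simpa [ae_iff, not_lt] using hnull
  have hbound (f : MvPolynomial (Fin d) ℝ) :
      IntegrableOn (fun x ↦ eval x f ^ 2 / eval x q) K ν ∧
        ∫ x in K, eval x f ^ 2 / eval x q ∂ν ≤ L (f ^ 2) := by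
    refine integrable_and_integral_le_of_monotone
      (G := fun n x ↦ eval x f ^ 2 * (eval x q / (eval x q ^ 2 + 1 / (n + 1)))) (fun n ↦ ?_)
      (fun n ↦ ?_) ?_ ?_ fun n ↦ setIntegral_sq_mul_div_sq_add_le L hL hrep hK
        (hpos.mono fun x hx ↦ hx.le) f (by positivity)
    · exact (((continuous_eval f).pow 2).mul ((continuous_eval q).div_sq_add (by positivity))
        ).continuousOn.integrableOn_compact hK
    · filter_upwards [hpos] with x hx using by positivity
    · filter_upwards [hpos] with x hx n m hnm
      exact mul_le_mul_of_nonneg_left (monotone_div_sq_add_one_div_succ hx.le hnm) (sq_nonneg _)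
    · filter_upwards [hpos] with x hx
      simpa [div_eq_mul_inv] using
        (tendsto_div_sq_add_one_div_succ hx.ne').const_mul (eval x f ^ 2)
  exact ⟨by simpa using (hbound 1).1, fun f ↦ (hbound f).2⟩
end
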